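/- arXiv:2410.09798 — 4 statements merged into one kernel-verified Lean document; each statement's English description precedes it below -/
import Mathlib

section
/- Let λ be a partition of n and ς = (s_1,…,s_d) a composition of n. The set CSYT^λ_ς of column-strict Young tableaux of shape λ and content ς is nonempty if and only if λ ⊵ ς^ord in dominance order, and the set RSYT^λ_ς of row-strict Young tableaux of shape λ and content ς is nonempty if and only if λ̄ ⊵ ς^ord, where λ̄ is the transpose partition of λ. -/
open scoped Classical

noncomputable section

/-- A filling is *row-strict* if its entries strictly increase along each row
(cells `(i,j)` with fixed row index `i`) and weakly increase down each column. -/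
def RowStrictFilling (cells : Finset (ℕ × ℕ)) (F : ℕ × ℕ → ℕ) : Prop :=
  (∀ c ∈ cells, ∀ c' ∈ cells, c.1 = c'.1 → c.2 < c'.2 → F c < F c') ∧
  (∀ c ∈ cells, ∀ c' ∈ cells, c.2 = c'.2 → c.1 < c'.1 → F c ≤ F c')

/-- A filling is *column-strict* if its entries weakly increase along each row
and strictly increase down each column. -/
def ColStrictFilling (cells : Finset (ℕ × ℕ)) (F : ℕ × ℕ → ℕ) : Prop :=
  (∀ c ∈ cells, ∀ c' ∈ cells, c.1 = c'.1 → c.2 < c'.2 → F c ≤ F c') ∧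
  (∀ c ∈ cells, ∀ c' ∈ cells, c.2 = c'.2 → c.1 < c'.1 → F c < F c')

/-- A filling has content `ς = (s_1, …, s_d)` if the entry `k` occurs exactly `s k`
times, for each `k ∈ {1, …, d}`. -/
def HasContent (d : ℕ) (s : ℕ → ℕ) (cells : Finset (ℕ × ℕ)) (F : ℕ × ℕ → ℕ) : Prop :=
  ∀ k ∈ Finset.Icc 1 d, (cells.filter fun c => F c = k).card = s k

/-- Normalization: a filling vanishes outside the cells of the diagram. -/
def ZeroOff (cells : Finset (ℕ × ℕ)) (F : ℕ × ℕ → ℕ) : Prop :=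
  ∀ c, c ∉ cells → F c = 0

/-- The set `RSYT^λ_ς` of row-strict Young tableaux of shape with cells `cells`
and content `ς`. -/
def RSYTset (d : ℕ) (s : ℕ → ℕ) (cells : Finset (ℕ × ℕ)) : Set (ℕ × ℕ → ℕ) :=
  {F | RowStrictFilling cells F ∧ HasContent d s cells F ∧ ZeroOff cells F}

/-- The set `CSYT^λ_ς` of column-strict Young tableaux of shape with cells `cells`
and content `ς`. -/
def CSYTset (d : ℕ) (s : ℕ → ℕ) (cells : Finset (ℕ × ℕ)) : Set (ℕ × ℕ → ℕ) :=
  {F | ColStrictFilling cells F ∧ HasContent d s cells F ∧ ZeroOff cells F}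

/-- Dominance order: `a ⊵ b` iff all partial sums of `a` dominate those of `b`. -/
def Dominates (a b : ℕ → ℕ) : Prop :=
  ∀ i, ∑ j ∈ Finset.range i, b j ≤ ∑ j ∈ Finset.range i, a j

/-- `ς^ord`: the composition `(s 1, …, s d)` rearranged in decreasing order,
read as a function `ℕ → ℕ` (0-indexed, extended by zeros). -/
def sOrd (d : ℕ) (s : ℕ → ℕ) : ℕ → ℕ :=
  fun i => (((List.range' 1 d).map s).insertionSort fun a b => b ≤ a).getD i 0

/-!
If a column-strict tableau of shape `λ` exists, pick the `i` values of largest multiplicity: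
column-strictness allows each of them at most once per column, so their
`ς^ord_1 + ⋯ + ς^ord_i` cells fit into the top `i` rows of `λ`, which is `λ ⊵ ς^ord`.

Conversely, induct on `d`. The cells carrying the largest entry `d` of a column-strict tableau
form a horizontal strip of size `s_d`. Remove from `λ` the horizontal strip of that size sitting
as low as possible; the smaller shape still dominates `ς^ord` with one copy of `s_d` deleted,
so it carries a tableau with content `(s_1, …, s_{d-1})`, and writing `d` into the strip
finishes the tableau.

Transposition turns row-strict tableaux of shape `λ` into column-strict ones of shape `λ̄`.
-/

open Finset

namespace List

theorem sum_take_succ_eq_add_getD (l : List ℕ) (i : ℕ) :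
    (l.take (i + 1)).sum = (l.take i).sum + l.getD i 0 := by
  rcases lt_or_ge i l.length with h | h
  · simp [sum_take_succ _ _ h, h]
  · simp [take_of_length_le h, take_of_length_le (h.trans i.le_succ), h]

theorem sum_range_getD_eq_sum_take (l : List ℕ) (i : ℕ) :
    ∑ j ∈ Finset.range i, l.getD j 0 = (l.take i).sum := by
  induction i with
  | zero => simp
  | succ i ih => rw [Finset.sum_range_succ, ih, sum_take_succ_eq_add_getD]

/-- Inserting `c` into a decreasing list raises the prefix sums that end before its position by
`c`, and the later ones by the entry pushed out of the prefix. -/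
theorem sum_take_erase_add {m : List ℕ} (hm : m.Pairwise (· ≥ ·)) {c : ℕ} (hc : c ∈ m)
    (i : ℕ) :
    ((m.erase c).take i).sum + c = (m.take i).sum + min c (m.getD i 0) := by
  induction m generalizing i with
  | nil => simp at hc
  | cons x t ih =>
    rw [pairwise_cons] at hm
    by_cases hxc : x = c
    · subst hxc
      cases i with
      | zero => simp
      | succ i =>
        have : t.getD i 0 ≤ x := by
          rcases lt_or_ge i t.length with h | h
          · simpa [h] using hm.1 _ (getElem_mem h)
          · simp [h]
        simp only [erase_cons_head, take_succ_cons, sum_cons, getD_cons_succ,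
          sum_take_succ_eq_add_getD, min_eq_right this]
        omega
    · have hct : c ∈ t := (mem_cons.mp hc).resolve_left (Ne.symm hxc)
      rw [erase_cons_tail (by simpa using hxc)]
      cases i with
      | zero => simpa using hm.1 c hct
      | succ i =>
        simp only [take_succ_cons, sum_cons, getD_cons_succ]
        have := ih hm.2 hct i
        omega

theorem sum_take_erase_add_le {m : List ℕ} (hm : m.Pairwise (· ≥ ·)) {c : ℕ} (hc : c ∈ m)
    {a : ℕ → ℕ} (hdom : ∀ i, (m.take i).sum ≤ ∑ r ∈ Finset.range i, a r) (i : ℕ) :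
    ((m.erase c).take i).sum + c ≤ ∑ r ∈ Finset.range i, a r + min c (a i) := by
  have h := hdom i
  have hsucc := hdom (i + 1)
  rw [sum_take_succ_eq_add_getD, Finset.sum_range_succ] at hsucc
  rw [sum_take_erase_add hm hc]
  omega

end List

def sortedContent (d : ℕ) (s : ℕ → ℕ) : List ℕ :=
  ((List.range' 1 d).map s).insertionSort fun a b => b ≤ a

theorem sortedContent_pairwise (d : ℕ) (s : ℕ → ℕ) :
    (sortedContent d s).Pairwise (· ≥ ·) :=
  List.pairwise_insertionSort _ _

theorem sortedContent_perm (d : ℕ) (s : ℕ → ℕ) :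
    (sortedContent d s).Perm ((List.range' 1 d).map s) :=
  List.perm_insertionSort _ _

theorem sum_range_sOrd (d : ℕ) (s : ℕ → ℕ) (i : ℕ) :
    ∑ j ∈ range i, sOrd d s j = ((sortedContent d s).take i).sum :=
  List.sum_range_getD_eq_sum_take _ i

theorem mem_sortedContent_succ (d : ℕ) (s : ℕ → ℕ) :
    s (d + 1) ∈ sortedContent (d + 1) s := by
  rw [(sortedContent_perm _ _).mem_iff, List.mem_map]
  exact ⟨d + 1, by simp [List.mem_range'_1], rfl⟩

theorem sortedContent_eq_erase_succ (d : ℕ) (s : ℕ → ℕ) :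
    sortedContent d s = (sortedContent (d + 1) s).erase (s (d + 1)) := by
  refine List.Perm.eq_of_pairwise' (sortedContent_pairwise d s)
    ((sortedContent_pairwise _ s).sublist (List.erase_sublist ..)) ?_
  have hperm : (sortedContent (d + 1) s).Perm (s (d + 1) :: sortedContent d s) := by
    refine (sortedContent_perm _ s).trans ?_
    rw [List.range'_1_concat, List.map_append, add_comm 1 d]
    exact (List.perm_append_singleton _ _).trans ((sortedContent_perm d s).symm.cons _)
  simpa using (hperm.erase (s (d + 1))).symm

theorem exists_subset_sum_eq_sum_take_sortedContent (d : ℕ) (s : ℕ → ℕ) (i : ℕ) :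
    ∃ K ⊆ Icc 1 d, K.card ≤ i ∧ ∑ k ∈ K, s k = ((sortedContent d s).take i).sum := by
  obtain ⟨l, hl, hsub⟩ :=
    (List.take_sublist i _).subperm.trans (sortedContent_perm d s).subperm
  obtain ⟨u, hu, rfl⟩ := List.sublist_map_iff.mp hsub
  have hnodup : u.Nodup := hu.nodup List.nodup_range'
  refine ⟨u.toFinset, fun k hk => ?_, ?_, ?_⟩
  · have := hu.subset (List.mem_toFinset.mp hk)
    rw [List.mem_range'_1] at this
    exact mem_Icc.mpr ⟨this.1, by omega⟩
  · rw [List.toFinset_card_of_nodup hnodup, ← List.length_map (f := s), hl.length_eq]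
    exact List.length_take_le _ _
  · rw [List.sum_toFinset _ hnodup]
    exact hl.sum_eq

namespace YoungDiagram

theorem card_filter_fst_lt (μ : YoungDiagram) (i : ℕ) :
    (μ.cells.filter fun x => x.1 < i).card = ∑ r ∈ range i, μ.rowLen r := by
  rw [card_eq_sum_card_fiberwise (f := Prod.fst) fun x hx => mem_range.mpr (mem_filter.mp hx).2]
  refine sum_congr rfl fun r hr => ?_
  rw [rowLen_eq_card]
  congr 1
  ext x
  simp only [mem_filter, mem_row_iff, mem_cells, mem_range] at hr ⊢
  constructor
  · rintro ⟨⟨hx, -⟩, rfl⟩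
    exact ⟨hx, rfl⟩
  · rintro ⟨hx, rfl⟩
    exact ⟨⟨hx, hr⟩, rfl⟩

theorem card_eq_sum_range_rowLen (μ : YoungDiagram) {R : ℕ} (hR : ∀ x ∈ μ, x.1 < R) :
    μ.card = ∑ r ∈ range R, μ.rowLen r := by
  rw [← card_filter_fst_lt, filter_true_of_mem fun x hx => hR x ((mem_cells x).mp hx)]

theorem fst_lt_colLen_zero (μ : YoungDiagram) {x : ℕ × ℕ} (hx : x ∈ μ) :
    x.1 < μ.colLen 0 :=
  mem_iff_lt_colLen.mp (μ.up_left_mem le_rfl (Nat.zero_le _) hx)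

theorem rowLen_colLen_zero (μ : YoungDiagram) : μ.rowLen (μ.colLen 0) = 0 := by
  by_contra h
  exact (μ.fst_lt_colLen_zero (mem_iff_lt_rowLen.mpr (Nat.pos_of_ne_zero h))).false

theorem card_filter_fst_lt_snd_eq (μ : YoungDiagram) (m j : ℕ) :
    (μ.cells.filter fun x => x.1 < m ∧ x.2 = j).card = min m (μ.colLen j) := by
  have : (μ.cells.filter fun x => x.1 < m ∧ x.2 = j) = range (min m (μ.colLen j)) ×ˢ {j} := by
    ext ⟨a, b⟩
    simp only [mem_filter, mem_cells, mem_product, mem_range, mem_singleton, lt_min_iff]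
    constructor
    · rintro ⟨hx, ha, rfl⟩
      exact ⟨⟨ha, mem_iff_lt_colLen.mp hx⟩, rfl⟩
    · rintro ⟨⟨ha, hx⟩, rfl⟩
      exact ⟨mem_iff_lt_colLen.mpr hx, ha, rfl⟩
  simp [this]

theorem card_transpose (μ : YoungDiagram) : μ.transpose.card = μ.card := by
  simp [YoungDiagram.card, transpose]

end YoungDiagram

section HasContent

variable {d : ℕ} {s : ℕ → ℕ} {A : Finset (ℕ × ℕ)} {F : ℕ × ℕ → ℕ}

theorem HasContent.card_filter_mem (h : HasContent d s A F) {K : Finset ℕ} (hK : K ⊆ Icc 1 d) :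
    (A.filter fun x => F x ∈ K).card = ∑ k ∈ K, s k := by
  calc (A.filter fun x => F x ∈ K).card
      = ∑ k ∈ K, ((A.filter fun x => F x ∈ K).filter fun x => F x = k).card :=
        card_eq_sum_card_fiberwise fun x hx => (mem_filter.mp hx).2
    _ = ∑ k ∈ K, s k := sum_congr rfl fun k hk => by
        rw [filter_filter, ← h k (hK hk)]
        exact congrArg card (filter_congr fun x _ => ⟨fun h => h.2, fun h => ⟨h ▸ hk, h⟩⟩)

theorem HasContent.mem_Icc (h : HasContent d s A F) (hA : A.card = ∑ k ∈ Icc 1 d, s k)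
    {x : ℕ × ℕ} (hx : x ∈ A) : F x ∈ Icc 1 d := by
  have hfilter : (A.filter fun x => F x ∈ Icc 1 d) = A :=
    eq_of_subset_of_card_le (filter_subset _ A) (hA.trans (h.card_filter_mem subset_rfl).symm).le
  rw [← hfilter] at hx
  exact (mem_filter.mp hx).2

end HasContent

theorem ColStrictFilling.card_filter_mem_le {μ : YoungDiagram} {F : ℕ × ℕ → ℕ}
    (hF : ColStrictFilling μ.cells F) (K : Finset ℕ) :
    (μ.cells.filter fun x => F x ∈ K).card ≤ ∑ r ∈ range K.card, μ.rowLen r := by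
  set A := μ.cells.filter fun x => F x ∈ K
  set B := μ.cells.filter fun x => x.1 < K.card
  have hcol : ∀ j, (A.filter fun x => x.2 = j).card ≤ (B.filter fun x => x.2 = j).card := by
    intro j
    simp only [A, B, filter_filter]
    rw [μ.card_filter_fst_lt_snd_eq]
    refine le_min (card_le_card_of_injOn F (fun x hx => ?_) fun x hx y hy hxy => ?_) ?_
    · exact (mem_filter.mp hx).2.1
    · simp only [mem_coe, mem_filter] at hx hy
      have hcol : x.2 = y.2 := hx.2.2.trans hy.2.2.symm
      rcases lt_trichotomy x.1 y.1 with h | h | h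
      · exact absurd hxy (hF.2 x hx.1 y hy.1 hcol h).ne
      · exact Prod.ext h hcol
      · exact absurd hxy.symm (hF.2 y hy.1 x hx.1 hcol.symm h).ne
    · rw [μ.colLen_eq_card]
      refine card_le_card fun x hx => ?_
      simp only [mem_filter, YoungDiagram.mem_col_iff, YoungDiagram.mem_cells] at hx ⊢
      exact ⟨hx.1, hx.2.2⟩
  have hsnd : ∀ x ∈ μ.cells, x.2 ∈ μ.cells.image Prod.snd := fun _ => mem_image_of_mem _
  calc A.card
      = ∑ j ∈ μ.cells.image Prod.snd, (A.filter fun x => x.2 = j).card :=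
        card_eq_sum_card_fiberwise fun x hx => hsnd x (mem_filter.mp hx).1
    _ ≤ ∑ j ∈ μ.cells.image Prod.snd, (B.filter fun x => x.2 = j).card :=
        sum_le_sum fun j _ => hcol j
    _ = B.card := (card_eq_sum_card_fiberwise fun x hx => hsnd x (mem_filter.mp hx).1).symm
    _ = ∑ r ∈ range K.card, μ.rowLen r := μ.card_filter_fst_lt K.card

theorem dominates_of_csyt_nonempty {d : ℕ} {s : ℕ → ℕ} {μ : YoungDiagram}
    (hne : (CSYTset d s μ.cells).Nonempty) : Dominates (fun i => μ.rowLen i) (sOrd d s) := by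
  obtain ⟨F, hF, hcont, -⟩ := hne
  intro i
  obtain ⟨K, hK, hKi, hKsum⟩ := exists_subset_sum_eq_sum_take_sortedContent d s i
  calc ∑ j ∈ range i, sOrd d s j
      = (μ.cells.filter fun x => F x ∈ K).card := by
        rw [sum_range_sOrd, ← hKsum, hcont.card_filter_mem hK]
    _ ≤ ∑ r ∈ range K.card, μ.rowLen r := hF.card_filter_mem_le K
    _ ≤ ∑ r ∈ range i, μ.rowLen r := sum_le_sum_of_subset (range_subset_range.mpr hKi)

namespace YoungDiagram

/-- Row `r` loses its rightmost `min c (μ.rowLen r) - min c (μ.rowLen (r + 1))` cells: the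
horizontal strip of size `c` that sits as low as possible in `μ`. -/
def removeStripRowLen (μ : YoungDiagram) (c r : ℕ) : ℕ :=
  μ.rowLen r - c + min c (μ.rowLen (r + 1))

theorem removeStripRowLen_le (μ : YoungDiagram) (c r : ℕ) :
    μ.removeStripRowLen c r ≤ μ.rowLen r := by
  have := μ.rowLen_anti r (r + 1) r.le_succ
  unfold removeStripRowLen
  omega

theorem rowLen_succ_le_removeStripRowLen (μ : YoungDiagram) (c r : ℕ) :
    μ.rowLen (r + 1) ≤ μ.removeStripRowLen c r := by
  have := μ.rowLen_anti r (r + 1) r.le_succ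
  unfold removeStripRowLen
  omega

theorem removeStripRowLen_anti (μ : YoungDiagram) (c : ℕ) : Antitone (μ.removeStripRowLen c) :=
  antitone_nat_of_succ_le fun r =>
    (μ.removeStripRowLen_le c (r + 1)).trans (μ.rowLen_succ_le_removeStripRowLen c r)

def removeStrip (μ : YoungDiagram) (c : ℕ) : YoungDiagram where
  cells := μ.cells.filter fun x => x.2 < μ.removeStripRowLen c x.1
  isLowerSet x y hxy hx := by
    simp only [coe_filter, Set.mem_ofPred_eq, mem_cells] at hx ⊢
    exact ⟨μ.isLowerSet hxy hx.1,
      hxy.2.trans_lt (hx.2.trans_le (μ.removeStripRowLen_anti c hxy.1))⟩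

theorem mem_removeStrip {μ : YoungDiagram} {c : ℕ} {x : ℕ × ℕ} :
    x ∈ μ.removeStrip c ↔ x.2 < μ.removeStripRowLen c x.1 := by
  rw [← mem_cells]
  simp only [removeStrip, mem_filter, mem_cells, and_iff_right_iff_imp]
  exact fun h => mem_iff_lt_rowLen.mpr (h.trans_le (μ.removeStripRowLen_le c x.1))

theorem removeStrip_le (μ : YoungDiagram) (c : ℕ) : μ.removeStrip c ≤ μ :=
  cells_subset_iff.mp (filter_subset _ _)

theorem rowLen_removeStrip (μ : YoungDiagram) (c r : ℕ) :
    (μ.removeStrip c).rowLen r = μ.removeStripRowLen c r :=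
  eq_of_forall_lt_iff fun j => by rw [← mem_iff_lt_rowLen, mem_removeStrip]

theorem succ_fst_notMem_of_notMem_removeStrip {μ : YoungDiagram} {c : ℕ} {x : ℕ × ℕ}
    (hx : x ∉ μ.removeStrip c) : (x.1 + 1, x.2) ∉ μ := fun h =>
  hx (mem_removeStrip.mpr
    ((mem_iff_lt_rowLen.mp h).trans_le (μ.rowLen_succ_le_removeStripRowLen c x.1)))

theorem sum_range_removeStripRowLen_add (μ : YoungDiagram) {c : ℕ} (hc : c ≤ μ.rowLen 0)
    (i : ℕ) : ∑ r ∈ range i, μ.removeStripRowLen c r + c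
      = ∑ r ∈ range i, μ.rowLen r + min c (μ.rowLen i) := by
  induction i with
  | zero => simp [hc]
  | succ i ih =>
    have := μ.rowLen_anti i (i + 1) i.le_succ
    simp only [sum_range_succ, removeStripRowLen] at ih ⊢
    omega

theorem card_removeStrip_add (μ : YoungDiagram) {c : ℕ} (hc : c ≤ μ.rowLen 0) :
    (μ.removeStrip c).card + c = μ.card := by
  have hR : ∀ x ∈ μ.removeStrip c, x.1 < μ.colLen 0 := fun x hx =>
    μ.fst_lt_colLen_zero (μ.removeStrip_le c hx)
  have := μ.sum_range_removeStripRowLen_add hc (μ.colLen 0)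
  rw [rowLen_colLen_zero, _root_.min_zero, add_zero] at this
  simp only [card_eq_sum_range_rowLen _ hR, rowLen_removeStrip, this,
    card_eq_sum_range_rowLen μ fun x => μ.fst_lt_colLen_zero]

end YoungDiagram

section ExtendFilling

open YoungDiagram

variable {d : ℕ} {s : ℕ → ℕ} {μ ν : YoungDiagram} {G : ℕ × ℕ → ℕ}

def extendFilling (μ ν : YoungDiagram) (G : ℕ × ℕ → ℕ) (d : ℕ) : ℕ × ℕ → ℕ :=
  fun x => if x ∈ ν then G x else if x ∈ μ then d + 1 else 0

theorem extendFilling_of_mem {x : ℕ × ℕ} (hx : x ∈ ν) : extendFilling μ ν G d x = G x :=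
  if_pos hx

theorem extendFilling_of_notMem {x : ℕ × ℕ} (hxμ : x ∈ μ) (hxν : x ∉ ν) :
    extendFilling μ ν G d x = d + 1 := by
  simp [extendFilling, hxμ, hxν]

theorem colStrictFilling_extendFilling (hstrip : ∀ x ∈ μ, x ∉ ν → (x.1 + 1, x.2) ∉ μ)
    (hG : ColStrictFilling ν.cells G) (hGd : ∀ x ∈ ν, G x ≤ d) :
    ColStrictFilling μ.cells (extendFilling μ ν G d) := by
  have hle : ∀ x ∈ ν, extendFilling μ ν G d x ≤ d := fun x hx =>
    (extendFilling_of_mem hx).trans_le (hGd x hx)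
  constructor
  · intro x hx y hy hrow hlt
    rw [mem_cells] at hx hy
    by_cases hyν : y ∈ ν
    · have hxν : x ∈ ν := ν.up_left_mem hrow.le hlt.le hyν
      rw [extendFilling_of_mem hxν, extendFilling_of_mem hyν]
      exact hG.1 x ((mem_cells x).mpr hxν) y ((mem_cells y).mpr hyν) hrow hlt
    · rw [extendFilling_of_notMem hy hyν]
      by_cases hxν : x ∈ ν
      · exact (hle x hxν).trans d.le_succ
      · exact (extendFilling_of_notMem hx hxν).le
  · intro x hx y hy hcol hlt
    rw [mem_cells] at hx hy
    have hxν : x ∈ ν := by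
      by_contra hxν
      exact hstrip x hx hxν (μ.up_left_mem hlt hcol.le hy)
    by_cases hyν : y ∈ ν
    · rw [extendFilling_of_mem hxν, extendFilling_of_mem hyν]
      exact hG.2 x ((mem_cells x).mpr hxν) y ((mem_cells y).mpr hyν) hcol hlt
    · rw [extendFilling_of_notMem hy hyν]
      exact Nat.lt_succ_of_le (hle x hxν)

theorem hasContent_extendFilling (hνμ : ν ≤ μ) (hG : HasContent d s ν.cells G)
    (hν : ν.card = ∑ k ∈ Icc 1 d, s k) (hμ : μ.card = ν.card + s (d + 1)) :
    HasContent (d + 1) s μ.cells (extendFilling μ ν G d) := by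
  have hsub : ν.cells ⊆ μ.cells := cells_subset_iff.mpr hνμ
  intro k hk
  rcases (by simpa using hk : 1 ≤ k ∧ k ≤ d + 1) with ⟨hk1, hk⟩
  rcases hk.lt_or_eq with hkd | rfl
  · have hk' : k ∈ Icc 1 d := mem_Icc.mpr ⟨hk1, Nat.le_of_lt_succ hkd⟩
    rw [← hG k hk']
    congr 1
    ext x
    simp only [mem_filter]
    by_cases hxν : x ∈ ν.cells
    · rw [extendFilling_of_mem ((mem_cells x).mp hxν)]
      exact ⟨fun h => ⟨hxν, h.2⟩, fun h => ⟨hsub hxν, h.2⟩⟩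
    · refine ⟨fun ⟨hxμ, hxk⟩ => ?_, fun h => absurd h.1 hxν⟩
      rw [extendFilling_of_notMem ((mem_cells x).mp hxμ) (by rwa [← mem_cells])] at hxk
      omega
  · have : (μ.cells.filter fun x => extendFilling μ ν G d x = d + 1) = μ.cells \ ν.cells := by
      ext x
      simp only [mem_filter, mem_sdiff]
      by_cases hxν : x ∈ ν.cells
      · have := (hG.mem_Icc hν hxν)
        rw [extendFilling_of_mem ((mem_cells x).mp hxν)]
        simp only [mem_Icc] at this
        exact ⟨fun h => by omega, fun h => absurd hxν h.2⟩
      · refine ⟨fun h => ⟨h.1, hxν⟩, fun h => ⟨h.1, ?_⟩⟩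
        exact extendFilling_of_notMem ((mem_cells x).mp h.1) (by rwa [← mem_cells])
    rw [this, card_sdiff_of_subset hsub]
    simp only [YoungDiagram.card] at hμ
    omega

theorem zeroOff_extendFilling (hνμ : ν ≤ μ) : ZeroOff μ.cells (extendFilling μ ν G d) := by
  intro x hx
  rw [mem_cells] at hx
  have hxν : x ∉ ν := fun h => hx (hνμ h)
  simp [extendFilling, hx, hxν]

end ExtendFilling

theorem csyt_nonempty_of_dominates (d : ℕ) (s : ℕ → ℕ) (μ : YoungDiagram)
    (hcard : μ.card = ∑ k ∈ Icc 1 d, s k)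
    (hdom : Dominates (fun i => μ.rowLen i) (sOrd d s)) :
    (CSYTset d s μ.cells).Nonempty := by
  induction d generalizing μ with
  | zero =>
    have hμ : μ.cells = ∅ := card_eq_zero.mp (by simpa using hcard)
    exact ⟨0, by simp [CSYTset, ColStrictFilling, HasContent, ZeroOff, hμ]⟩
  | succ d ih =>
    set c := s (d + 1)
    set ν := μ.removeStrip c
    have hstrip : ∀ i, ((sortedContent d s).take i).sum + c
        ≤ ∑ r ∈ range i, μ.rowLen r + min c (μ.rowLen i) := by
      rw [sortedContent_eq_erase_succ]
      exact List.sum_take_erase_add_le (sortedContent_pairwise _ _) (mem_sortedContent_succ d s)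
        fun i => (sum_range_sOrd (d + 1) s i).symm.trans_le (hdom i)
    have hc : c ≤ μ.rowLen 0 := by simpa using hstrip 0
    have hνdom : Dominates (fun i => ν.rowLen i) (sOrd d s) := fun i => by
      have := hstrip i
      rw [← μ.sum_range_removeStripRowLen_add hc] at this
      simp only [sum_range_sOrd, ν, YoungDiagram.rowLen_removeStrip]
      omega
    have hνμ : ν.card + c = μ.card := μ.card_removeStrip_add hc
    rw [sum_Icc_succ_top (by omega)] at hcard
    have hνcard : ν.card = ∑ k ∈ Icc 1 d, s k := by omega
    obtain ⟨G, hG, hGcont, -⟩ := ih ν hνcard hνdom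
    refine ⟨extendFilling μ ν G d, ?_, ?_, zeroOff_extendFilling (μ.removeStrip_le c)⟩
    · refine colStrictFilling_extendFilling (fun x _ hx => ?_) hG fun x hx => ?_
      · exact YoungDiagram.succ_fst_notMem_of_notMem_removeStrip hx
      · exact (mem_Icc.mp (hGcont.mem_Icc hνcard ((YoungDiagram.mem_cells x).mpr hx))).2
    · exact hasContent_extendFilling (μ.removeStrip_le c) hGcont hνcard (by omega)

theorem mem_rsyt_iff_comp_swap_mem_csyt_transpose {d : ℕ} {s : ℕ → ℕ} {μ : YoungDiagram}
    {F : ℕ × ℕ → ℕ} :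
    F ∈ RSYTset d s μ.cells ↔ F ∘ Prod.swap ∈ CSYTset d s μ.transpose.cells := by
  have hmem : ∀ x : ℕ × ℕ, x ∈ μ.transpose.cells ↔ x.swap ∈ μ.cells := fun x => by
    simp only [YoungDiagram.mem_cells, YoungDiagram.mem_transpose]
  have hcontent : ∀ k, (μ.transpose.cells.filter fun x => F x.swap = k).card
      = (μ.cells.filter fun x => F x = k).card := fun k =>
    card_nbij' Prod.swap Prod.swap (fun x hx => by simpa [hmem] using hx)
      (fun x hx => by simpa [hmem] using hx) (fun x _ => x.swap_swap) (fun x _ => x.swap_swap)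
  simp only [RSYTset, CSYTset, RowStrictFilling, ColStrictFilling, HasContent, ZeroOff,
    Set.mem_ofPred_eq, Function.comp_apply, hcontent, hmem, Prod.forall, Prod.swap_prod_mk]
  constructor <;> rintro ⟨⟨hrow, hcol⟩, hcont, hzero⟩ <;>
    exact ⟨⟨fun a b h a' b' h' => hcol b a h b' a' h',
      fun a b h a' b' h' => hrow b a h b' a' h'⟩, hcont, fun a b => hzero b a⟩

theorem rsyt_nonempty_iff_csyt_transpose_nonempty {d : ℕ} {s : ℕ → ℕ} {μ : YoungDiagram} :
    (RSYTset d s μ.cells).Nonempty ↔ (CSYTset d s μ.transpose.cells).Nonempty :=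
  ⟨fun ⟨F, hF⟩ => ⟨F ∘ Prod.swap, mem_rsyt_iff_comp_swap_mem_csyt_transpose.mp hF⟩,
    fun ⟨G, hG⟩ => ⟨G ∘ Prod.swap, mem_rsyt_iff_comp_swap_mem_csyt_transpose.mpr (by
      simpa [Function.comp_def] using hG)⟩⟩

theorem csyt_rsyt_nonempty_iff_dominance_general
    (n d : ℕ) (s : ℕ → ℕ)
    (hsum : ∑ k ∈ Finset.Icc 1 d, s k = n)
    (μ : YoungDiagram) (hcard : μ.card = n) :
    ((CSYTset d s μ.cells).Nonempty ↔ Dominates (fun i => μ.rowLen i) (sOrd d s)) ∧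
    ((RSYTset d s μ.cells).Nonempty ↔ Dominates (fun i => μ.transpose.rowLen i) (sOrd d s)) := by
  have hμ : μ.card = ∑ k ∈ Icc 1 d, s k := hcard.trans hsum.symm
  have hμT : μ.transpose.card = ∑ k ∈ Icc 1 d, s k := μ.card_transpose.trans hμ
  rw [rsyt_nonempty_iff_csyt_transpose_nonempty]
  exact ⟨⟨dominates_of_csyt_nonempty, csyt_nonempty_of_dominates d s μ hμ⟩,
    ⟨dominates_of_csyt_nonempty, csyt_nonempty_of_dominates d s μ.transpose hμT⟩⟩

/-- For a partition `λ` of `n` (a Young diagram `μ` with `n` cells) and a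
composition `ς = (s 1, …, s d)` of `n`: `CSYT^λ_ς ≠ ∅ ↔ λ ⊵ ς^ord` and
`RSYT^λ_ς ≠ ∅ ↔ λ̄ ⊵ ς^ord`, where `λ̄` is the transpose of `λ`. -/
theorem csyt_rsyt_nonempty_iff_dominance
    (n d : ℕ) (hn : 0 < n) (hd : 0 < d) (s : ℕ → ℕ)
    (hpos : ∀ k ∈ Finset.Icc 1 d, 0 < s k)
    (hsum : ∑ k ∈ Finset.Icc 1 d, s k = n)
    (μ : YoungDiagram) (hcard : μ.card = n) :
    ((CSYTset d s μ.cells).Nonempty ↔ Dominates (fun i => μ.rowLen i) (sOrd d s)) ∧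
    ((RSYTset d s μ.cells).Nonempty ↔ Dominates (fun i => μ.transpose.rowLen i) (sOrd d s)) :=
  csyt_rsyt_nonempty_iff_dominance_general n d s hsum μ hcard
end
end

section
/- Let λ = (1^n) be the single-column partition of n and let T be the unique element of RSYT^{(1^n)}_ς. Then the fused Specht polynomial satisfies 𝓕_T(x_1,…,x_d) = ∏_{1≤i<j≤d} (x_j − x_i)^{s_i s_j}. Equivalently: if Q is the exact polynomial quotient of the full Vandermonde ∏_{1≤i<j≤n}(x_j − x_i) by V_ς(x_1,…,x_n), then substituting, for each k, all variables x_{q_k},…,x_{q_{k+1}−1} by a single variable x_k turns Q into ∏_{1≤i<j≤d}(x_j − x_i)^{s_i s_j}. -/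
open scoped Classical
open MvPolynomial

noncomputable section

/-- `q k = 1 + s 1 + ⋯ + s (k-1)`. -/
def qIdx (s : ℕ → ℕ) (k : ℕ) : ℕ := 1 + ∑ j ∈ Finset.Ico 1 k, s j

/-- Extension of a permutation of `Fin n` to the 1-based letters `{1, …, n} ⊆ ℕ`. -/
def extendPerm (n : ℕ) (σ : Equiv.Perm (Fin n)) : ℕ → ℕ :=
  fun i => if h : 1 ≤ i ∧ i ≤ n then ((σ ⟨i - 1, by omega⟩ : Fin n) : ℕ) + 1 else i

/-- Membership in the colored symmetric group `S_{s_1} × ⋯ × S_{s_d}`. -/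
def InBlocks (n d : ℕ) (s : ℕ → ℕ) (σ : Equiv.Perm (Fin n)) : Prop :=
  ∀ i : Fin n, ∀ k ∈ Finset.Icc 1 d,
    (qIdx s k ≤ (i : ℕ) + 1 ∧ (i : ℕ) + 1 < qIdx s (k + 1)) →
    (qIdx s k ≤ ((σ i : Fin n) : ℕ) + 1 ∧ ((σ i : Fin n) : ℕ) + 1 < qIdx s (k + 1))

/-- The action of the `ς`-antisymmetrizer `p_ς` on polynomials. -/
def pAct (n d : ℕ) (s : ℕ → ℕ) (f : MvPolynomial ℕ ℂ) : MvPolynomial ℕ ℂ :=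
  (∏ k ∈ Finset.Icc 1 d, ((s k).factorial : ℂ))⁻¹ •
    ∑ σ ∈ Finset.univ.filter (InBlocks n d s),
      ((Equiv.Perm.sign σ : ℤ) : ℂ) • MvPolynomial.rename (extendPerm n σ) f

/-- The Specht polynomial of a numbering. -/
def spechtPoly (cells : Finset (ℕ × ℕ)) (Nb : ℕ × ℕ → ℕ) : MvPolynomial ℕ ℂ :=
  ∏ p ∈ (cells ×ˢ cells).filter (fun p => p.1.2 = p.2.2 ∧ p.2.1 < p.1.1),
    (X (Nb p.1) - X (Nb p.2))

/-- Column-reading order on cells. -/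
def colReadLT (c c' : ℕ × ℕ) : Prop :=
  c.2 < c'.2 ∨ (c.2 = c'.2 ∧ c.1 < c'.1)

/-- The standardization `F̃` of a filling `F`. -/
def stdize (s : ℕ → ℕ) (cells : Finset (ℕ × ℕ)) (F : ℕ × ℕ → ℕ) : ℕ × ℕ → ℕ :=
  fun c => qIdx s (F c) + (cells.filter fun c' => colReadLT c' c ∧ F c' = F c).card

/-- `V_ς(x) = ∏_{k=1}^d ∏_{q_k ≤ i < j < q_{k+1}} (x_j - x_i)`. -/
def vandBlocks (d : ℕ) (s : ℕ → ℕ) : MvPolynomial ℕ ℂ :=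
  ∏ k ∈ Finset.Icc 1 d,
    ∏ p ∈ ((Finset.Icc (qIdx s k) (qIdx s (k + 1) - 1)) ×ˢ
            (Finset.Icc (qIdx s k) (qIdx s (k + 1) - 1))).filter (fun p => p.1 < p.2),
      (X p.2 - X p.1)

/-- The full Vandermonde polynomial `∏_{1 ≤ i < j ≤ n} (x_j - x_i)`. -/
def fullVand (n : ℕ) : MvPolynomial ℕ ℂ :=
  ∏ p ∈ ((Finset.Icc 1 n) ×ˢ (Finset.Icc 1 n)).filter (fun p => p.1 < p.2),
    (X p.2 - X p.1)

/-- The exact quotient of `f` by `v` (the unique `g` with `f = v * g` when it exists). -/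
def exactQuot (v f : MvPolynomial ℕ ℂ) : MvPolynomial ℕ ℂ :=
  if h : ∃ g, f = v * g then h.choose else 0

/-- The substitution collapsing each block of variables `x_{q_k}, …, x_{q_{k+1}-1}`
to the single variable `x_k`. -/
def collapseVar (d : ℕ) (s : ℕ → ℕ) : ℕ → ℕ :=
  fun i => ∑ k ∈ (Finset.Icc 1 d).filter (fun k => qIdx s k ≤ i ∧ i < qIdx s (k + 1)), k

/-- The fused Specht polynomial `𝓕_F`. -/
def fusedSpecht (n d : ℕ) (s : ℕ → ℕ) (cells : Finset (ℕ × ℕ)) (F : ℕ × ℕ → ℕ) :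
    MvPolynomial ℕ ℂ :=
  MvPolynomial.rename (collapseVar d s)
    (exactQuot (vandBlocks d s) (pAct n d s (spechtPoly cells (stdize s cells F))))

/-- The single-column Young diagram `(1^n)`: one column of `n` cells. -/
def oneColumn (n : ℕ) : Finset (ℕ × ℕ) := (Finset.range n) ×ˢ ({0} : Finset ℕ)

/-! The standardization of the unique one-column tableau numbers the column `1, …, n` from top
to bottom, so its Specht polynomial is the full Vandermonde. Every block permutation multiplies the
Vandermonde by its sign, so `p_ς` fixes it. Sorting its factors `x_j - x_i` by the blocks of `i`
and `j` writes it as `V_ς` times the product of the cross-block factors, which is therefore the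
exact quotient; collapsing the variables sends each of the `s_k s_l` factors between blocks
`k < l` to `x_l - x_k`. -/

open Finset

def ltPairs {α : Type*} [LinearOrder α] (S : Finset α) : Finset (α × α) :=
  (S ×ˢ S).filter (fun p => p.1 < p.2)

lemma mem_ltPairs {α : Type*} [LinearOrder α] {S : Finset α} {p : α × α} :
    p ∈ ltPairs S ↔ p.1 ∈ S ∧ p.2 ∈ S ∧ p.1 < p.2 := by
  simp [ltPairs, and_assoc]

theorem prod_ltPairs_eq_prod_fibers_mul {α ι M : Type*} [LinearOrder α] [LinearOrder ι]
    [CommMonoid M] {S : Finset α} {I : Finset ι} {c : α → ι} (hc : ∀ i ∈ S, c i ∈ I)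
    (hmono : MonotoneOn c S) (f : α × α → M) :
    ∏ p ∈ ltPairs S, f p =
      (∏ k ∈ I, ∏ p ∈ ltPairs (S.filter (c · = k)), f p) *
        ∏ kl ∈ ltPairs I, ∏ p ∈ S.filter (c · = kl.1) ×ˢ S.filter (c · = kl.2), f p := by
  rw [← prod_filter_mul_prod_filter_not (ltPairs S) (fun p => c p.1 = c p.2)]
  congr 1
  · rw [← prod_fiberwise_of_maps_to (g := fun p => c p.1) (t := I)
      (fun p hp => hc _ (mem_ltPairs.1 (mem_filter.1 hp).1).1)]
    refine prod_congr rfl fun k _ => prod_congr ?_ fun _ _ => rfl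
    ext p
    simp only [mem_filter, mem_ltPairs]
    grind
  · have hmaps : ∀ p ∈ (ltPairs S).filter (fun p => ¬ c p.1 = c p.2),
        (c p.1, c p.2) ∈ ltPairs I := by
      intro p hp
      obtain ⟨⟨h1, h2, hlt⟩, hne⟩ := (mem_filter.1 hp).imp_left mem_ltPairs.1
      exact mem_ltPairs.2 ⟨hc _ h1, hc _ h2, lt_of_le_of_ne (hmono h1 h2 hlt.le) hne⟩
    rw [← prod_fiberwise_of_maps_to hmaps]
    refine prod_congr rfl fun kl hkl => prod_congr ?_ fun _ _ => rfl
    have hkl := (mem_ltPairs.1 hkl).2.2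
    ext ⟨i, j⟩
    simp only [mem_filter, mem_ltPairs, mem_product, Prod.ext_iff]
    constructor
    · rintro ⟨⟨⟨hi, hj, -⟩, -⟩, hci, hcj⟩
      exact ⟨⟨hi, hci⟩, hj, hcj⟩
    · rintro ⟨⟨hi, hci⟩, hj, hcj⟩
      rw [← hci, ← hcj] at hkl
      exact ⟨⟨⟨hi, hj, hmono.reflect_lt hi hj hkl⟩, hkl.ne⟩, hci, hcj⟩

lemma card_filter_mem_eq_sum_card_filter_eq {α β : Type*} [DecidableEq β] (S : Finset α)
    (t : Finset β) (f : α → β) : #(S.filter (f · ∈ t)) = ∑ k ∈ t, #(S.filter (f · = k)) := by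
  rw [card_eq_sum_card_fiberwise (f := f) (s := S.filter (f · ∈ t))
    fun x hx => (mem_filter.1 hx).2]
  refine sum_congr rfl fun k hk => ?_
  rw [filter_filter]
  exact congrArg card (filter_congr fun x _ => ⟨fun h => h.2, fun h => ⟨h ▸ hk, h⟩⟩)

lemma exactQuot_mul {v g : MvPolynomial ℕ ℂ} (hv : v ≠ 0) : exactQuot v (v * g) = g := by
  have hex : ∃ g', v * g = v * g' := ⟨g, rfl⟩
  rw [exactQuot, dif_pos hex]
  exact mul_left_cancel₀ hv hex.choose_spec.symm

section Blocks

variable {n d : ℕ} {s : ℕ → ℕ}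

def block (s : ℕ → ℕ) (k : ℕ) : Finset ℕ := Ico (qIdx s k) (qIdx s (k + 1))

lemma one_le_qIdx (k : ℕ) : 1 ≤ qIdx s k := Nat.le_add_right 1 _

lemma qIdx_succ {k : ℕ} (hk : 1 ≤ k) : qIdx s (k + 1) = qIdx s k + s k := by
  rw [qIdx, qIdx, sum_Ico_succ_top hk, add_assoc]

lemma qIdx_mono : Monotone (qIdx s) := fun _ _ h =>
  Nat.add_le_add_left (sum_le_sum_of_subset (Ico_subset_Ico le_rfl h)) 1

lemma qIdx_add_one_of_sum_eq (hsum : ∑ k ∈ Icc 1 d, s k = n) : qIdx s (d + 1) = n + 1 := by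
  rw [qIdx, Ico_add_one_right_eq_Icc, hsum, add_comm]

lemma card_block {k : ℕ} (hk : 1 ≤ k) : #(block s k) = s k := by
  rw [block, Nat.card_Ico, qIdx_succ hk, Nat.add_sub_cancel_left]

lemma eq_of_mem_block {k l m : ℕ} (hk : m ∈ block s k) (hl : m ∈ block s l) : k = l := by
  simp only [block, mem_Ico] at hk hl
  by_contra hne
  rcases Nat.lt_or_gt_of_ne hne with h | h
  · have := qIdx_mono (s := s) (show k + 1 ≤ l by omega); omega
  · have := qIdx_mono (s := s) (show l + 1 ≤ k by omega); omega

lemma exists_mem_block {m : ℕ} (hm : 1 ≤ m) (hmd : m < qIdx s (d + 1)) :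
    ∃ k ∈ Icc 1 d, m ∈ block s k := by
  induction d with
  | zero => simp [qIdx] at hmd; omega
  | succ d ih =>
    by_cases hd : m < qIdx s (d + 1)
    · obtain ⟨k, hk, hmk⟩ := ih hd
      exact ⟨k, Icc_subset_Icc_right d.le_succ hk, hmk⟩
    · exact ⟨d + 1, mem_Icc.2 ⟨d.succ_pos, le_rfl⟩, mem_Ico.2 ⟨not_lt.1 hd, hmd⟩⟩

lemma block_subset_Icc (hsum : ∑ k ∈ Icc 1 d, s k = n) {k : ℕ} (hk : k ∈ Icc 1 d) :
    block s k ⊆ Icc 1 n := by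
  intro m hm
  have := qIdx_mono (s := s) (Nat.add_le_add_right (mem_Icc.1 hk).2 1)
  rw [qIdx_add_one_of_sum_eq hsum] at this
  have := one_le_qIdx (s := s) k
  simp only [block, mem_Ico, mem_Icc] at hm ⊢
  omega

lemma collapseVar_eq_of_mem_block {k m : ℕ} (hk : k ∈ Icc 1 d) (hm : m ∈ block s k) :
    collapseVar d s m = k := by
  have : (Icc 1 d).filter (fun j => qIdx s j ≤ m ∧ m < qIdx s (j + 1)) = {k} := by
    ext j
    rw [mem_filter, mem_singleton, ← mem_Ico]
    exact ⟨fun h => eq_of_mem_block h.2 hm, fun h => h ▸ ⟨hk, hm⟩⟩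
  rw [collapseVar, this, sum_singleton]

lemma collapseVar_mem_Icc_and_mem_block (hsum : ∑ k ∈ Icc 1 d, s k = n) {m : ℕ}
    (hm : m ∈ Icc 1 n) : collapseVar d s m ∈ Icc 1 d ∧ m ∈ block s (collapseVar d s m) := by
  obtain ⟨k, hk, hmk⟩ := exists_mem_block (mem_Icc.1 hm).1
    (by rw [qIdx_add_one_of_sum_eq hsum]; exact Nat.lt_succ_of_le (mem_Icc.1 hm).2)
  rw [collapseVar_eq_of_mem_block hk hmk]
  exact ⟨hk, hmk⟩

lemma monotoneOn_collapseVar (hsum : ∑ k ∈ Icc 1 d, s k = n) :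
    MonotoneOn (collapseVar d s) (Icc 1 n) := by
  intro a ha b hb hab
  have hka := (collapseVar_mem_Icc_and_mem_block hsum ha).2
  have hkb := (collapseVar_mem_Icc_and_mem_block hsum hb).2
  by_contra! h
  have := qIdx_mono (s := s) (show collapseVar d s b + 1 ≤ collapseVar d s a by omega)
  simp only [block, mem_Ico] at hka hkb
  omega

lemma filter_collapseVar_eq (hsum : ∑ k ∈ Icc 1 d, s k = n) {k : ℕ} (hk : k ∈ Icc 1 d) :
    (Icc 1 n).filter (collapseVar d s · = k) = block s k := by
  ext m
  rw [mem_filter]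
  constructor
  · rintro ⟨hm, rfl⟩
    exact (collapseVar_mem_Icc_and_mem_block hsum hm).2
  · intro hm
    exact ⟨block_subset_Icc hsum hk hm, collapseVar_eq_of_mem_block hk hm⟩

end Blocks

section Vandermonde

variable {n d : ℕ} {s : ℕ → ℕ}

def crossVand (d : ℕ) (s : ℕ → ℕ) : MvPolynomial ℕ ℂ :=
  ∏ kl ∈ ltPairs (Icc 1 d), ∏ p ∈ block s kl.1 ×ˢ block s kl.2, (X p.2 - X p.1)

lemma fullVand_eq_vandBlocks_mul_crossVand (hsum : ∑ k ∈ Icc 1 d, s k = n) :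
    fullVand n = vandBlocks d s * crossVand d s := by
  have hfib : ∀ {k}, k ∈ Icc 1 d → _ := filter_collapseVar_eq hsum
  rw [fullVand, ← ltPairs, prod_ltPairs_eq_prod_fibers_mul
    (fun m hm => (collapseVar_mem_Icc_and_mem_block hsum hm).1) (monotoneOn_collapseVar hsum)]
  congr 1
  · refine prod_congr rfl fun k hk => ?_
    rw [hfib hk, block, ← Ico_add_one_right_eq_Icc, Nat.sub_add_cancel (one_le_qIdx _)]
    rfl
  · refine prod_congr rfl fun kl hkl => ?_
    obtain ⟨hk, hl, -⟩ := mem_ltPairs.1 hkl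
    rw [hfib hk, hfib hl]

lemma rename_collapseVar_crossVand :
    rename (collapseVar d s) (crossVand d s) =
      ∏ kl ∈ ltPairs (Icc 1 d), ((X kl.2 - X kl.1 : MvPolynomial ℕ ℂ)) ^ (s kl.1 * s kl.2) := by
  rw [crossVand, map_prod]
  refine prod_congr rfl fun kl hkl => ?_
  obtain ⟨hk, hl, -⟩ := mem_ltPairs.1 hkl
  rw [map_prod, ← card_block (s := s) (mem_Icc.1 hk).1, ← card_block (s := s) (mem_Icc.1 hl).1,
    ← card_product, ← prod_const]
  refine prod_congr rfl fun p hp => ?_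
  rw [mem_product] at hp
  rw [map_sub, rename_X, rename_X, collapseVar_eq_of_mem_block hk hp.1,
    collapseVar_eq_of_mem_block hl hp.2]

lemma vandBlocks_ne_zero : vandBlocks d s ≠ 0 :=
  prod_ne_zero_iff.2 fun _ _ => prod_ne_zero_iff.2 fun _ hp =>
    sub_ne_zero.2 fun h => (mem_filter.1 hp).2.ne' (X_injective h)

end Vandermonde

section Antisymmetrizer

variable {n d : ℕ} {s : ℕ → ℕ}

lemma fullVand_eq_det_vandermonde :
    fullVand n =
      (Matrix.vandermonde fun i : Fin n => (X ((i : ℕ) + 1) : MvPolynomial ℕ ℂ)).det := by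
  rw [Matrix.det_vandermonde, prod_sigma', fullVand]
  refine (prod_nbij (fun x => ((x.1 : ℕ) + 1, (x.2 : ℕ) + 1)) ?_ ?_ ?_ ?_).symm
  · rintro ⟨i, j⟩ h
    simp only [mem_sigma, mem_univ, mem_Ioi, true_and] at h
    simp only [mem_filter, mem_product, mem_Icc]
    have := Fin.lt_def.1 h
    omega
  · rintro ⟨i, j⟩ - ⟨i', j'⟩ - h
    simp only [Prod.mk.injEq, Nat.add_right_cancel_iff, Fin.val_inj] at h
    obtain ⟨rfl, rfl⟩ := h
    rfl
  · rintro ⟨a, b⟩ h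
    rw [mem_coe, mem_filter, mem_product, mem_Icc, mem_Icc] at h
    refine ⟨⟨⟨a - 1, by omega⟩, ⟨b - 1, by omega⟩⟩, ?_, ?_⟩
    · simp only [coe_sigma, Set.mem_sigma_iff, mem_coe, mem_univ, mem_Ioi, true_and]
      exact Fin.mk_lt_mk.2 (by omega)
    · simp only [Prod.mk.injEq]
      omega
  · exact fun _ _ => rfl

lemma extendPerm_val_add_one (σ : Equiv.Perm (Fin n)) (i : Fin n) :
    extendPerm n σ ((i : ℕ) + 1) = ((σ i : Fin n) : ℕ) + 1 := by
  rw [extendPerm, dif_pos ⟨Nat.le_add_left 1 _, i.isLt⟩]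
  rfl

lemma rename_extendPerm_fullVand (σ : Equiv.Perm (Fin n)) :
    rename (extendPerm n σ) (fullVand n) = ((Equiv.Perm.sign σ : ℤ) : ℂ) • fullVand n := by
  set V := Matrix.vandermonde fun i : Fin n => (X ((i : ℕ) + 1) : MvPolynomial ℕ ℂ)
  have hV : (rename (extendPerm n σ)).mapMatrix V = V.submatrix σ id := by
    ext i j
    simp [V, Matrix.vandermonde_apply, extendPerm_val_add_one]
  rw [fullVand_eq_det_vandermonde, AlgHom.map_det, hV, Matrix.det_permute, smul_eq_C_mul]
  rfl

lemma val_add_one_mem_Icc (i : Fin n) : (i : ℕ) + 1 ∈ Icc 1 n :=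
  mem_Icc.2 ⟨Nat.le_add_left 1 _, i.isLt⟩

-- `i : Fin n` stands for the letter `i + 1`, as in `extendPerm`.
def finBlock (n d : ℕ) (s : ℕ → ℕ) (i : Fin n) : ℕ := collapseVar d s ((i : ℕ) + 1)

lemma inBlocks_iff (hsum : ∑ k ∈ Icc 1 d, s k = n) (σ : Equiv.Perm (Fin n)) :
    InBlocks n d s σ ↔ finBlock n d s ∘ σ = finBlock n d s := by
  have hblock (i : Fin n) := collapseVar_mem_Icc_and_mem_block hsum (val_add_one_mem_Icc i)
  have hdef : InBlocks n d s σ ↔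
      ∀ i : Fin n, ∀ k ∈ Icc 1 d, (i : ℕ) + 1 ∈ block s k → (σ i : ℕ) + 1 ∈ block s k := by
    simp only [InBlocks, block, mem_Ico]
  rw [hdef, _root_.funext_iff]
  constructor
  · intro h i
    obtain ⟨hk, hi⟩ := hblock i
    exact collapseVar_eq_of_mem_block hk (h i _ hk hi)
  · intro h i k hk hi
    have hσi := (hblock (σ i)).2
    have hci : collapseVar d s ((σ i : ℕ) + 1) = collapseVar d s ((i : ℕ) + 1) := h i
    rwa [hci, collapseVar_eq_of_mem_block hk hi] at hσi

lemma card_subtype_finBlock_eq (hsum : ∑ k ∈ Icc 1 d, s k = n) {k : ℕ} (hk : k ∈ Icc 1 d) :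
    Fintype.card {i // finBlock n d s i = k} = s k := by
  rw [Fintype.card_subtype, ← card_block (s := s) (mem_Icc.1 hk).1,
    ← filter_collapseVar_eq hsum hk]
  refine card_bij (fun i _ => (i : ℕ) + 1) (fun i hi => ?_) (fun _ _ _ _ h => Fin.ext
    (Nat.add_right_cancel h)) fun m hm => ?_
  · exact mem_filter.2 ⟨val_add_one_mem_Icc i, (mem_filter.1 hi).2⟩
  · obtain ⟨hm, hmk⟩ := mem_filter.1 hm
    have := mem_Icc.1 hm
    refine ⟨⟨m - 1, by omega⟩, mem_filter.2 ⟨mem_univ _, ?_⟩, by simp only; omega⟩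
    show collapseVar d s (m - 1 + 1) = k
    rwa [Nat.sub_add_cancel this.1]

lemma card_filter_inBlocks (hsum : ∑ k ∈ Icc 1 d, s k = n) :
    #(univ.filter (InBlocks n d s)) = ∏ k ∈ Icc 1 d, (s k).factorial := by
  have himage : univ.image (finBlock n d s) ⊆ Icc 1 d := fun k hk => by
    obtain ⟨i, -, rfl⟩ := mem_image.1 hk
    exact (collapseVar_mem_Icc_and_mem_block hsum (val_add_one_mem_Icc i)).1
  have hfactorial_one : ∀ k ∈ Icc 1 d, k ∉ univ.image (finBlock n d s) →
      (Fintype.card {i // finBlock n d s i = k}).factorial = 1 := fun k _ hk => by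
    rw [Fintype.card_eq_zero_iff.2 ⟨fun i => hk (mem_image.2 ⟨i.1, mem_univ _, i.2⟩)⟩,
      Nat.factorial_zero]
  rw [filter_congr fun σ _ => inBlocks_iff hsum σ, ← Fintype.card_subtype,
    DomMulAct.stabilizer_card', prod_subset himage hfactorial_one]
  exact prod_congr rfl fun k hk => by rw [card_subtype_finBlock_eq hsum hk]

lemma pAct_fullVand (hsum : ∑ k ∈ Icc 1 d, s k = n) : pAct n d s (fullVand n) = fullVand n := by
  have hterm (σ : Equiv.Perm (Fin n)) :
      ((Equiv.Perm.sign σ : ℤ) : ℂ) • rename (extendPerm n σ) (fullVand n) = fullVand n := by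
    rw [rename_extendPerm_fullVand, smul_smul, ← Int.cast_mul, ← Units.val_mul,
      Int.units_mul_self, Units.val_one, Int.cast_one, one_smul]
  rw [pAct, sum_congr rfl fun σ _ => hterm σ, sum_const, card_filter_inBlocks hsum,
    ← Nat.cast_smul_eq_nsmul ℂ, smul_smul, Nat.cast_prod,
    inv_mul_cancel₀ (prod_ne_zero_iff.2 fun k _ => Nat.cast_ne_zero.2 (s k).factorial_ne_zero),
    one_smul]

end Antisymmetrizer

section Tableau

variable {n d : ℕ} {s : ℕ → ℕ} {T : ℕ × ℕ → ℕ}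

lemma card_filter_oneColumn (P : ℕ × ℕ → Prop) [DecidablePred P] :
    #((oneColumn n).filter P) = #((range n).filter fun i => P (i, 0)) := by
  rw [oneColumn, product_singleton, filter_map, card_map]
  rfl

lemma monotoneOn_column (hT : T ∈ RSYTset d s (oneColumn n)) :
    MonotoneOn (fun i => T (i, 0)) (range n) := by
  intro i hi j hj hij
  have hmem (m : ℕ) (hm : m ∈ (range n : Set ℕ)) : (m, 0) ∈ oneColumn n := by
    simpa [oneColumn] using hm
  rcases hij.lt_or_eq with h | rfl
  · exact hT.1.2 _ (hmem i hi) _ (hmem j hj) rfl h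
  · exact le_rfl

lemma card_filter_column_eq (hT : T ∈ RSYTset d s (oneColumn n)) {k : ℕ} (hk : k ∈ Icc 1 d) :
    #((range n).filter fun i => T (i, 0) = k) = s k := by
  rw [← hT.2.1 k hk, card_filter_oneColumn]

lemma column_mem_Icc (hsum : ∑ k ∈ Icc 1 d, s k = n) (hT : T ∈ RSYTset d s (oneColumn n))
    {i : ℕ} (hi : i < n) : T (i, 0) ∈ Icc 1 d := by
  have hcard : #((range n).filter fun i => T (i, 0) ∈ Icc 1 d) = #(range n) := by
    rw [card_filter_mem_eq_sum_card_filter_eq, sum_congr rfl fun k => card_filter_column_eq hT,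
      hsum, card_range]
  exact card_filter_eq_iff.1 hcard i (mem_range.2 hi)

lemma card_filter_column_lt (hsum : ∑ k ∈ Icc 1 d, s k = n)
    (hT : T ∈ RSYTset d s (oneColumn n)) {k : ℕ} (hk : k ≤ d + 1) :
    #((range n).filter fun i => T (i, 0) < k) = qIdx s k - 1 := by
  have hfilter : (range n).filter (fun i => T (i, 0) < k) =
      (range n).filter (fun i => T (i, 0) ∈ Ico 1 k) := filter_congr fun i hi => by
    have := mem_Icc.1 (column_mem_Icc hsum hT (mem_range.1 hi))
    rw [mem_Ico]
    omega
  rw [hfilter, card_filter_mem_eq_sum_card_filter_eq, qIdx, Nat.add_sub_cancel_left]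
  exact sum_congr rfl fun l hl => card_filter_column_eq hT (by
    rw [mem_Ico] at hl
    exact mem_Icc.2 ⟨hl.1, by omega⟩)

lemma stdize_oneColumn (hsum : ∑ k ∈ Icc 1 d, s k = n) (hT : T ∈ RSYTset d s (oneColumn n))
    {i : ℕ} (hi : i < n) : stdize s (oneColumn n) T (i, 0) = i + 1 := by
  have hmono := monotoneOn_column hT
  have hbelow : (range n).filter (fun a => T (a, 0) < T (i, 0)) ⊆ range i := fun a ha => by
    rw [mem_filter] at ha
    exact mem_range.2 (hmono.reflect_lt ha.1 (mem_range.2 hi) ha.2)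
  -- The cells above `(i, 0)` with the same entry `k` are those of `range i` minus the
  -- `q_k - 1` cells with a smaller entry.
  have hset : (range n).filter (fun a => colReadLT (a, 0) (i, 0) ∧ T (a, 0) = T (i, 0)) =
      range i \ (range n).filter (fun a => T (a, 0) < T (i, 0)) := by
    ext a
    simp only [colReadLT, mem_filter, mem_sdiff, mem_range, lt_irrefl, false_or, true_and]
    constructor
    · rintro ⟨-, hai, hak⟩
      exact ⟨hai, fun h => h.2.ne hak⟩
    · rintro ⟨hai, hak⟩
      have han : a < n := hai.trans hi
      exact ⟨han, hai, (hmono (mem_range.2 han) (mem_range.2 hi) hai.le).eq_of_not_lt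
        fun h => hak ⟨han, h⟩⟩
  have hcard := card_filter_column_lt hsum hT
    (Nat.le_succ_of_le (mem_Icc.1 (column_mem_Icc hsum hT hi)).2)
  have hle := card_le_card hbelow
  rw [card_range, hcard] at hle
  rw [stdize, card_filter_oneColumn, hset, card_sdiff_of_subset hbelow, card_range, hcard]
  have := one_le_qIdx (s := s) (T (i, 0))
  omega

lemma spechtPoly_oneColumn {N : ℕ × ℕ → ℕ} (hN : ∀ i < n, N (i, 0) = i + 1) :
    spechtPoly (oneColumn n) N = fullVand n := by
  refine prod_nbij (fun p => (p.2.1 + 1, p.1.1 + 1)) ?_ ?_ ?_ ?_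
  · rintro ⟨⟨a, b⟩, ⟨a', b'⟩⟩ h
    simp only [oneColumn, mem_filter, mem_product, mem_range, mem_singleton] at h
    simp only [mem_filter, mem_product, mem_Icc]
    omega
  · rintro ⟨⟨a, b⟩, ⟨a', b'⟩⟩ h ⟨⟨c, e⟩, ⟨c', e'⟩⟩ h' heq
    rw [mem_coe, mem_filter] at h h'
    simp only [oneColumn, mem_product, mem_range, mem_singleton] at h h'
    simp only [Prod.mk.injEq] at heq ⊢
    omega
  · rintro ⟨a, b⟩ h
    rw [mem_coe, mem_filter, mem_product, mem_Icc, mem_Icc] at h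
    dsimp only at h
    refine ⟨((b - 1, 0), (a - 1, 0)), ?_, ?_⟩
    · rw [mem_coe, mem_filter]
      simp only [oneColumn, mem_product, mem_range, mem_singleton, and_true, true_and]
      omega
    · simp only [Prod.mk.injEq]
      omega
  · rintro ⟨⟨a, b⟩, ⟨a', b'⟩⟩ h
    simp only [oneColumn, mem_filter, mem_product, mem_range, mem_singleton] at h
    obtain ⟨⟨⟨ha, rfl⟩, ha', rfl⟩, -, -⟩ := h
    rw [hN a ha, hN a' ha']

end Tableau

theorem fusedSpecht_oneColumn_general
    (n d : ℕ) (s : ℕ → ℕ)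
    (hsum : ∑ k ∈ Finset.Icc 1 d, s k = n) :
    (∀ T ∈ RSYTset d s (oneColumn n),
      fusedSpecht n d s (oneColumn n) T
        = ∏ p ∈ ((Finset.Icc 1 d) ×ˢ (Finset.Icc 1 d)).filter (fun p => p.1 < p.2),
            (X p.2 - X p.1) ^ (s p.1 * s p.2)) ∧
    (∀ Q : MvPolynomial ℕ ℂ, vandBlocks d s * Q = fullVand n →
      MvPolynomial.rename (collapseVar d s) Q
        = ∏ p ∈ ((Finset.Icc 1 d) ×ˢ (Finset.Icc 1 d)).filter (fun p => p.1 < p.2),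
            (X p.2 - X p.1) ^ (s p.1 * s p.2)) := by
  have hfactor := fullVand_eq_vandBlocks_mul_crossVand hsum
  refine ⟨fun T hT => ?_, fun Q hQ => ?_⟩
  · rw [fusedSpecht, spechtPoly_oneColumn fun i hi => stdize_oneColumn hsum hT hi,
      pAct_fullVand hsum, hfactor, exactQuot_mul vandBlocks_ne_zero,
      rename_collapseVar_crossVand]
    rfl
  · rw [mul_left_cancel₀ vandBlocks_ne_zero (hQ.trans hfactor), rename_collapseVar_crossVand]
    rfl

/-- For `λ = (1^n)` and `T` the unique element of `RSYT^{(1^n)}_ς`, the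
fused Specht polynomial is `𝓕_T = ∏_{1 ≤ i < j ≤ d} (x_j - x_i)^{s_i s_j}`.
Equivalently, if `Q` is the exact polynomial quotient of the full Vandermonde by `V_ς`,
then collapsing the blocks of variables turns `Q` into `∏_{i<j} (x_j - x_i)^{s_i s_j}`. -/
theorem fusedSpecht_oneColumn
    (n d : ℕ) (hn : 0 < n) (hd : 0 < d) (s : ℕ → ℕ)
    (hpos : ∀ k ∈ Finset.Icc 1 d, 0 < s k)
    (hsum : ∑ k ∈ Finset.Icc 1 d, s k = n) :
    (∀ T ∈ RSYTset d s (oneColumn n),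
      fusedSpecht n d s (oneColumn n) T
        = ∏ p ∈ ((Finset.Icc 1 d) ×ˢ (Finset.Icc 1 d)).filter (fun p => p.1 < p.2),
            (X p.2 - X p.1) ^ (s p.1 * s p.2)) ∧
    (∀ Q : MvPolynomial ℕ ℂ, vandBlocks d s * Q = fullVand n →
      MvPolynomial.rename (collapseVar d s) Q
        = ∏ p ∈ ((Finset.Icc 1 d) ×ˢ (Finset.Icc 1 d)).filter (fun p => p.1 < p.2),
            (X p.2 - X p.1) ^ (s p.1 * s p.2)) :=
  fusedSpecht_oneColumn_general n d s hsum
end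
end

section
/- Let λ be a partition of n whose Young diagram has at most two columns (λ_i ≤ 2 for all i) and let ς be a composition of n. Then the map T ↦ (|λ^T(1)|, …, |λ^T(d)|) from RSYT^λ_ς to ℤ^d is injective. -/
open scoped Classical

noncomputable section

/-- `|λ^T(k)| = ∑_i (r_i^{T,ord}(k) - s_k + i - 1)
= (∑ row numbers of the boxes of T containing k) - s_k (s_k + 1)/2`. -/
def absLam (s : ℕ → ℕ) (cells : Finset (ℕ × ℕ)) (T : ℕ × ℕ → ℕ) (k : ℕ) : ℕ :=
  (∑ c ∈ cells.filter (fun c => T c = k), (c.1 + 1)) - s k * (s k + 1) / 2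

/-!
Write `a_k` and `b_k` for the numbers of entries `≤ k` in the two columns of `T`. Columns increase
weakly, so these entries fill the top `a_k` and `b_k` boxes of the columns: there are `a_k + b_k` of
them, and their row numbers (counted from 1) add up to `a_k(a_k+1)/2 + b_k(b_k+1)/2`. A value
occupies at most one box per row, so the row numbers of its `s_k` boxes add up to at least
`s_k(s_k+1)/2`; hence the truncated difference `|λ^T(k)|` determines that sum, and summing over the
values `≤ k` recovers both quantities above. Row strictness gives `b_k ≤ a_k`, and a pair `b ≤ a`
is determined by `a + b` and `a² + b²`. So every `a_k, b_k`, and with them `T`, is determined.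
-/

open Finset

theorem Finset.eq_range_card_of_isLowerSet {S : Finset ℕ} (hS : IsLowerSet (S : Set ℕ)) :
    S = range #S := by
  obtain huniv | ⟨a, ha⟩ := hS.eq_univ_or_Iio
  · exact absurd (huniv ▸ S.finite_toSet) Set.infinite_univ
  · have hSa : S = range a := by rw [← coe_inj, ha, coe_range]
    rw [hSa, card_range]

theorem two_mul_sum_range_succ (m : ℕ) : 2 * ∑ i ∈ range m, (i + 1) = m * (m + 1) := by
  induction m with
  | zero => simp
  | succ m ih => rw [sum_range_succ, mul_add, ih]; ring

theorem sum_range_succ_le_sum_succ (R : Finset ℕ) :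
    ∑ i ∈ range #R, (i + 1) ≤ ∑ r ∈ R, (r + 1) := by
  induction R using Finset.induction_on_max with
  | empty => simp
  | insert a R hlt ih =>
    have haR : a ∉ R := fun ha => lt_irrefl a (hlt a ha)
    have hcard : #R ≤ a := by
      simpa using card_le_card (fun x hx => mem_range.mpr (hlt x hx) : R ⊆ range a)
    rw [card_insert_of_notMem haR, sum_range_succ, sum_insert haR]
    omega

theorem Nat.eq_of_add_eq_of_sq_add_sq_eq {a b a' b' : ℕ} (hb : b ≤ a) (hb' : b' ≤ a')
    (hsum : a + b = a' + b') (hsq : a ^ 2 + b ^ 2 = a' ^ 2 + b' ^ 2) : a = a' := by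
  -- `(a - b) ^ 2 = 2 (a ^ 2 + b ^ 2) - (a + b) ^ 2`
  nlinarith

theorem HasContent.mem_Icc_s9 {d : ℕ} {s : ℕ → ℕ} {cells : Finset (ℕ × ℕ)} {F : ℕ × ℕ → ℕ}
    (hF : HasContent d s cells F) (hcard : ∑ k ∈ Icc 1 d, s k = #cells) :
    ∀ c ∈ cells, F c ∈ Icc 1 d := by
  refine filter_card_eq (le_antisymm (card_filter_le _ _) ?_)
  rw [card_eq_sum_card_fiberwise (s := {c ∈ cells | F c ∈ Icc 1 d}) (t := Icc 1 d)
    fun c hc => (mem_filter.mp hc).2, ← hcard]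
  refine (sum_congr rfl fun k hk => ?_).le
  rw [← hF k hk, filter_filter]
  exact congrArg card (filter_congr fun c _ => by constructor <;> aesop)

theorem sum_filter_le_eq_of_sum_filter_eq {α M : Type*} [AddCommMonoid M] {s : Finset α}
    {t : Finset ℕ} {F F' : α → ℕ} (hF : ∀ c ∈ s, F c ∈ t) (hF' : ∀ c ∈ s, F' c ∈ t) (f : α → M)
    (h : ∀ v ∈ t, ∑ c ∈ s with F c = v, f c = ∑ c ∈ s with F' c = v, f c) (k : ℕ) :
    ∑ c ∈ s with F c ≤ k, f c = ∑ c ∈ s with F' c ≤ k, f c := by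
  have fiberwise : ∀ G : α → ℕ, (∀ c ∈ s, G c ∈ t) →
      ∑ c ∈ s with G c ≤ k, f c = ∑ v ∈ t with v ≤ k, ∑ c ∈ s with G c = v, f c := by
    intro G hG
    rw [← sum_fiberwise_of_maps_to (s := {c ∈ s | G c ≤ k}) (t := {v ∈ t | v ≤ k}) (g := G)
      fun c hc => mem_filter.mpr ⟨hG c (mem_filter.mp hc).1, (mem_filter.mp hc).2⟩]
    refine sum_congr rfl fun v hv => ?_
    rw [filter_filter]
    exact sum_congr (filter_congr fun c _ => by
      have := (mem_filter.mp hv).2; constructor <;> aesop) fun _ _ => rfl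
  rw [fiberwise F hF, fiberwise F' hF']
  exact sum_congr rfl fun v hv => h v (mem_filter.mp hv).1

theorem card_mul_succ_div_two_le_sum_succ {C : Finset (ℕ × ℕ)}
    (hC : Set.InjOn Prod.fst (C : Set (ℕ × ℕ))) : #C * (#C + 1) / 2 ≤ ∑ c ∈ C, (c.1 + 1) := by
  rw [← card_image_of_injOn hC, ← sum_image (f := (· + 1)) hC]
  have hgauss := two_mul_sum_range_succ #(C.image Prod.fst)
  have hlow := sum_range_succ_le_sum_succ (C.image Prod.fst)
  omega

theorem RowStrictFilling.injOn_fst_filter_eq {cells : Finset (ℕ × ℕ)} {T : ℕ × ℕ → ℕ}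
    (hT : RowStrictFilling cells T) (k : ℕ) :
    Set.InjOn Prod.fst (({c ∈ cells | T c = k} : Finset (ℕ × ℕ)) : Set (ℕ × ℕ)) := by
  intro c hc c' hc' hrow
  simp only [mem_coe, mem_filter] at hc hc'
  rcases lt_trichotomy c.2 c'.2 with hlt | heq | hgt
  · exact absurd (hT.1 c hc.1 c' hc'.1 hrow hlt) (by omega)
  · exact Prod.ext hrow heq
  · exact absurd (hT.1 c' hc'.1 c hc.1 hrow.symm hgt) (by omega)

theorem sum_filter_eq_of_absLam_eq {s : ℕ → ℕ} {cells : Finset (ℕ × ℕ)} {T T' : ℕ × ℕ → ℕ}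
    (hT : RowStrictFilling cells T) (hT' : RowStrictFilling cells T') {k : ℕ}
    (hk : #{c ∈ cells | T c = k} = s k) (hk' : #{c ∈ cells | T' c = k} = s k)
    (h : absLam s cells T k = absLam s cells T' k) :
    ∑ c ∈ cells with T c = k, (c.1 + 1) = ∑ c ∈ cells with T' c = k, (c.1 + 1) := by
  have hlow := card_mul_succ_div_two_le_sum_succ (hT.injOn_fst_filter_eq k)
  have hlow' := card_mul_succ_div_two_le_sum_succ (hT'.injOn_fst_filter_eq k)
  rw [hk] at hlow
  rw [hk'] at hlow'
  unfold absLam at h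
  omega

section YoungDiagram

variable {μ : YoungDiagram} {T T' : ℕ × ℕ → ℕ}

def colCount (μ : YoungDiagram) (T : ℕ × ℕ → ℕ) (j k : ℕ) : ℕ :=
  #{i ∈ range (μ.colLen j) | T (i, j) ≤ k}

theorem lt_colCount_iff
    (hcol : ∀ c ∈ μ.cells, ∀ c' ∈ μ.cells, c.2 = c'.2 → c.1 < c'.1 → T c ≤ T c')
    {i j k : ℕ} : i < colCount μ T j k ↔ (i, j) ∈ μ ∧ T (i, j) ≤ k := by
  set S : Finset ℕ := {i ∈ range (μ.colLen j) | T (i, j) ≤ k}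
  have hmem : ∀ i, i ∈ S ↔ (i, j) ∈ μ ∧ T (i, j) ≤ k := fun i => by
    simp [S, YoungDiagram.mem_iff_lt_colLen]
  have hlower : IsLowerSet (S : Set ℕ) := by
    intro i i' hle hi
    obtain ⟨hcell, hle_k⟩ := (hmem i).mp hi
    have hcell' : (i', j) ∈ μ := μ.up_left_mem hle le_rfl hcell
    refine (hmem i').mpr ⟨hcell', ?_⟩
    rcases hle.lt_or_eq with hlt | rfl
    · exact (hcol _ hcell' _ hcell rfl hlt).trans hle_k
    · exact hle_k
  rw [← hmem]
  show i < #S ↔ i ∈ S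
  rw [← mem_range, ← S.eq_range_card_of_isLowerSet hlower]

theorem sum_filter_le_and_snd_eq {M : Type*} [AddCommMonoid M]
    (hcol : ∀ c ∈ μ.cells, ∀ c' ∈ μ.cells, c.2 = c'.2 → c.1 < c'.1 → T c ≤ T c')
    (f : ℕ × ℕ → M) (j k : ℕ) :
    ∑ c ∈ μ.cells with T c ≤ k ∧ c.2 = j, f c = ∑ i ∈ range (colCount μ T j k), f (i, j) := by
  have hcells : {c ∈ μ.cells | T c ≤ k ∧ c.2 = j}
      = (range (colCount μ T j k)).image (·, j) := by
    ext ⟨i, j'⟩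
    simp only [mem_filter, mem_image, mem_range, Prod.mk.injEq]
    constructor
    · rintro ⟨hcell, hle, rfl⟩
      exact ⟨i, (lt_colCount_iff hcol).mpr ⟨hcell, hle⟩, rfl, rfl⟩
    · rintro ⟨i, hi, rfl, rfl⟩
      exact ⟨((lt_colCount_iff hcol).mp hi).1, ((lt_colCount_iff hcol).mp hi).2, rfl⟩
  rw [hcells, sum_image fun _ _ _ _ h => (Prod.ext_iff.mp h).1]

theorem sum_filter_le_eq_add_of_twoColumns {M : Type*} [AddCommMonoid M]
    (h2col : ∀ c ∈ μ.cells, c.2 ≤ 1)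
    (hcol : ∀ c ∈ μ.cells, ∀ c' ∈ μ.cells, c.2 = c'.2 → c.1 < c'.1 → T c ≤ T c')
    (f : ℕ × ℕ → M) (k : ℕ) :
    ∑ c ∈ μ.cells with T c ≤ k, f c
      = ∑ i ∈ range (colCount μ T 0 k), f (i, 0) + ∑ i ∈ range (colCount μ T 1 k), f (i, 1) := by
  rw [← sum_fiberwise_of_maps_to (t := range 2) (g := Prod.snd)
    fun c hc => mem_range.mpr (Nat.lt_succ_of_le (h2col c (mem_filter.mp hc).1)),
    sum_range_succ, sum_range_one, filter_filter, filter_filter,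
    sum_filter_le_and_snd_eq hcol, sum_filter_le_and_snd_eq hcol]

theorem colCount_one_le_colCount_zero (hT : RowStrictFilling μ.cells T) (k : ℕ) :
    colCount μ T 1 k ≤ colCount μ T 0 k := by
  refine le_of_forall_lt fun i hi => ?_
  obtain ⟨hcell, hle⟩ := (lt_colCount_iff hT.2).mp hi
  have hcell' : (i, 0) ∈ μ := μ.up_left_mem le_rfl zero_le_one hcell
  have hlt := hT.1 _ hcell' _ hcell rfl zero_lt_one
  exact (lt_colCount_iff hT.2).mpr ⟨hcell', by omega⟩

theorem colCount_eq_of_twoColumns (h2col : ∀ c ∈ μ.cells, c.2 ≤ 1)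
    (hT : RowStrictFilling μ.cells T) (hT' : RowStrictFilling μ.cells T') {k : ℕ}
    (hcard : #{c ∈ μ.cells | T c ≤ k} = #{c ∈ μ.cells | T' c ≤ k})
    (hrows : ∑ c ∈ μ.cells with T c ≤ k, (c.1 + 1) = ∑ c ∈ μ.cells with T' c ≤ k, (c.1 + 1)) :
    colCount μ T 0 k = colCount μ T' 0 k ∧ colCount μ T 1 k = colCount μ T' 1 k := by
  rw [card_eq_sum_ones, card_eq_sum_ones, sum_filter_le_eq_add_of_twoColumns h2col hT.2,
    sum_filter_le_eq_add_of_twoColumns h2col hT'.2] at hcard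
  rw [sum_filter_le_eq_add_of_twoColumns h2col hT.2,
    sum_filter_le_eq_add_of_twoColumns h2col hT'.2] at hrows
  simp only [sum_const, card_range, smul_eq_mul, mul_one] at hcard
  have hsq : colCount μ T 0 k ^ 2 + colCount μ T 1 k ^ 2
      = colCount μ T' 0 k ^ 2 + colCount μ T' 1 k ^ 2 := by
    have := two_mul_sum_range_succ (colCount μ T 0 k)
    have := two_mul_sum_range_succ (colCount μ T 1 k)
    have := two_mul_sum_range_succ (colCount μ T' 0 k)
    have := two_mul_sum_range_succ (colCount μ T' 1 k)
    nlinarith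
  have h0 := Nat.eq_of_add_eq_of_sq_add_sq_eq (colCount_one_le_colCount_zero hT k)
    (colCount_one_le_colCount_zero hT' k) hcard hsq
  exact ⟨h0, by omega⟩

theorem eq_of_colCount_eq
    (hcol : ∀ c ∈ μ.cells, ∀ c' ∈ μ.cells, c.2 = c'.2 → c.1 < c'.1 → T c ≤ T c')
    (hcol' : ∀ c ∈ μ.cells, ∀ c' ∈ μ.cells, c.2 = c'.2 → c.1 < c'.1 → T' c ≤ T' c')
    (hzero : ZeroOff μ.cells T) (hzero' : ZeroOff μ.cells T')
    (h : ∀ c ∈ μ.cells, ∀ k, colCount μ T c.2 k = colCount μ T' c.2 k) : T = T' := by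
  funext c
  by_cases hc : c ∈ μ.cells
  · have hle_iff : ∀ k, T c ≤ k ↔ T' c ≤ k := fun k => by
      have hiff := lt_colCount_iff hcol (i := c.1) (j := c.2) (k := k)
      rw [h c hc k, lt_colCount_iff hcol'] at hiff
      exact and_congr_right_iff.mp hiff.symm hc
    exact le_antisymm ((hle_iff _).mpr le_rfl) ((hle_iff _).mp le_rfl)
  · rw [hzero c hc, hzero' c hc]

end YoungDiagram

theorem absLam_injective_twoColumns_general
    (n d : ℕ) (s : ℕ → ℕ)
    (hsum : ∑ k ∈ Finset.Icc 1 d, s k = n)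
    (μ : YoungDiagram) (hcard : μ.card = n)
    (h2col : ∀ c ∈ μ.cells, c.2 ≤ 1)
    (T : ℕ × ℕ → ℕ) (hT : T ∈ RSYTset d s μ.cells)
    (T' : ℕ × ℕ → ℕ) (hT' : T' ∈ RSYTset d s μ.cells)
    (h : ∀ k ∈ Finset.Icc 1 d, absLam s μ.cells T k = absLam s μ.cells T' k) :
    T = T' := by
  obtain ⟨hrs, hcont, hzero⟩ := hT
  obtain ⟨hrs', hcont', hzero'⟩ := hT'
  have hvals := hcont.mem_Icc_s9 (hsum.trans hcard.symm)
  have hvals' := hcont'.mem_Icc_s9 (hsum.trans hcard.symm)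
  have hcards (k : ℕ) : #{c ∈ μ.cells | T c ≤ k} = #{c ∈ μ.cells | T' c ≤ k} := by
    simp only [card_eq_sum_ones]
    refine sum_filter_le_eq_of_sum_filter_eq hvals hvals' _ (fun v hv => ?_) k
    rw [← card_eq_sum_ones, ← card_eq_sum_ones, hcont v hv, hcont' v hv]
  have hrows (k : ℕ) :
      ∑ c ∈ μ.cells with T c ≤ k, (c.1 + 1) = ∑ c ∈ μ.cells with T' c ≤ k, (c.1 + 1) :=
    sum_filter_le_eq_of_sum_filter_eq hvals hvals' _ (fun v hv =>
      sum_filter_eq_of_absLam_eq hrs hrs' (hcont v hv) (hcont' v hv) (h v hv)) k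
  refine eq_of_colCount_eq hrs.2 hrs'.2 hzero hzero' fun c hc k => ?_
  obtain ⟨h0, h1⟩ := colCount_eq_of_twoColumns h2col hrs hrs' (hcards k) (hrows k)
  rcases Nat.le_one_iff_eq_zero_or_eq_one.mp (h2col c hc) with hj | hj <;> rw [hj]
  exacts [h0, h1]

/-- For a Young diagram `μ` with at most two columns, the map
`T ↦ (|λ^T(1)|, …, |λ^T(d)|)` from `RSYT^λ_ς` is injective. -/
theorem absLam_injective_twoColumns
    (n d : ℕ) (hn : 0 < n) (hd : 0 < d) (s : ℕ → ℕ)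
    (hpos : ∀ k ∈ Finset.Icc 1 d, 0 < s k)
    (hsum : ∑ k ∈ Finset.Icc 1 d, s k = n)
    (μ : YoungDiagram) (hcard : μ.card = n)
    (h2col : ∀ c ∈ μ.cells, c.2 ≤ 1)
    (T : ℕ × ℕ → ℕ) (hT : T ∈ RSYTset d s μ.cells)
    (T' : ℕ × ℕ → ℕ) (hT' : T' ∈ RSYTset d s μ.cells)
    (h : ∀ k ∈ Finset.Icc 1 d, absLam s μ.cells T k = absLam s μ.cells T' k) :
    T = T' :=
  absLam_injective_twoColumns_general n d s hsum μ hcard h2col T hT T' hT' h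
end
end

section
/- Let ς = (s_1,…,s_d) be a composition of 2N and let φ be a Möbius transformation of the upper half-plane with φ(x_1) < ⋯ < φ(x_d) for a given x ∈ 𝔛_d. Then ∏_{1≤i<j≤d} (φ(x_j) − φ(x_i))^{−s_i s_j/2} = ∏_{i=1}^d φ'(x_i)^{s_i(s_i − 2N)/4} × ∏_{1≤i<j≤d} (x_j − x_i)^{−s_i s_j/2}. -/
/-!
Since `φ(y) - φ(x) = (y - x) √(φ'(x) φ'(y))`, each factor `(φ(x_j) - φ(x_i))^{w_ij}` splits as
`(x_j - x_i)^{w_ij} φ'(x_i)^{w_ij/2} φ'(x_j)^{w_ij/2}`. Collecting the powers of `φ'(x_i)` over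
all `j ≠ i` gives the exponent `∑_{j ≠ i} w_ij / 2 = -s_i (2N - s_i) / 4`, because the weights
`w_ij = -s_i s_j / 2` are symmetric and `∑_j s_j = 2N`.
-/

open Finset

theorem Finset.prod_filter_lt_mul_swap {ι M : Type*} [Fintype ι] [LinearOrder ι] [CommMonoid M]
    (g : ι → ι → M) :
    ∏ p ∈ univ.filter (fun p : ι × ι => p.1 < p.2), g p.1 p.2 * g p.2 p.1 =
      ∏ i, ∏ j ∈ univ.erase i, g i j := by
  have hsplit : ∀ i j : ι, (if i < j then g i j * g j i else 1) =
      (if i < j then g i j else 1) * (if i < j then g j i else 1) := by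
    intro i j; split_ifs <;> simp
  have hmerge : ∀ i j : ι, (if i < j then g i j else 1) * (if j < i then g i j else 1) =
      if j ∈ univ.erase i then g i j else 1 := by
    intro i j
    rcases lt_trichotomy i j with h | rfl | h
    · simp [h, h.ne', h.not_gt]
    · simp
    · simp [h, h.ne, h.not_gt]
  rw [prod_filter, Fintype.prod_prod_type]
  simp only [hsplit, prod_mul_distrib]
  rw [prod_comm (f := fun i j => if i < j then g j i else 1), ← prod_mul_distrib]
  simp only [← prod_mul_distrib, hmerge, prod_ite_mem, univ_inter]

theorem sum_erase_neg_mul_div {ι : Type*} [Fintype ι] [DecidableEq ι] (t : ι → ℝ) (i : ι) :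
    ∑ j ∈ univ.erase i, -(t i * t j) / 2 / 2 = t i * (t i - ∑ j, t j) / 4 := by
  calc ∑ j ∈ univ.erase i, -(t i * t j) / 2 / 2 = -(t i / 4) * ∑ j ∈ univ.erase i, t j := by
        rw [mul_sum]; congr! 1; ring
    _ = t i * (t i - ∑ j, t j) / 4 := by rw [← add_sum_erase _ _ (mem_univ i)]; ring

theorem prod_sub_rpow_eq_of_sub_eq_mul_sqrt {ι : Type*} [Fintype ι] [LinearOrder ι]
    (x y D : ι → ℝ) (w : ι → ι → ℝ) (hx : Monotone x) (hD : ∀ i, 0 < D i)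
    (hw : ∀ i j, w i j = w j i) (hxy : ∀ i j, i < j → y j - y i = (x j - x i) * √(D i * D j)) :
    ∏ p ∈ univ.filter (fun p : ι × ι => p.1 < p.2), (y p.2 - y p.1) ^ w p.1 p.2 =
      (∏ i, D i ^ ∑ j ∈ univ.erase i, w i j / 2) *
        ∏ p ∈ univ.filter (fun p : ι × ι => p.1 < p.2), (x p.2 - x p.1) ^ w p.1 p.2 := by
  have hfactor : ∀ i j, i < j → (y j - y i) ^ w i j =
      (D i ^ (w i j / 2) * D j ^ (w j i / 2)) * (x j - x i) ^ w i j := by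
    intro i j hij
    rw [hxy i j hij, Real.mul_rpow (sub_nonneg.2 (hx hij.le)) (Real.sqrt_nonneg _),
      Real.sqrt_eq_rpow, ← Real.rpow_mul (mul_pos (hD i) (hD j)).le,
      Real.mul_rpow (hD i).le (hD j).le, hw j i, one_div_mul_eq_div, mul_comm]
  rw [prod_congr rfl fun p hp => hfactor p.1 p.2 (mem_filter.1 hp).2, prod_mul_distrib,
    prod_filter_lt_mul_swap (fun i j => D i ^ (w i j / 2))]
  simp only [Real.rpow_sum_of_pos (hD _)]

theorem mobius_sub_eq_mul_sqrt {a b c e x y : ℝ} (hx : c * x + e ≠ 0) (hy : c * y + e ≠ 0)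
    (hxy : x < y) (hφ : (a * x + b) / (c * x + e) < (a * y + b) / (c * y + e)) :
    (a * y + b) / (c * y + e) - (a * x + b) / (c * x + e) =
      (y - x) * √((a * e - b * c) / (c * x + e) ^ 2 * ((a * e - b * c) / (c * y + e) ^ 2)) := by
  have hsub : (a * y + b) / (c * y + e) - (a * x + b) / (c * x + e) =
      (y - x) * ((a * e - b * c) / ((c * x + e) * (c * y + e))) := by
    rw [div_sub_div _ _ hy hx, mul_div_assoc']
    congr 1 <;> ring
  -- The difference quotient of `φ` is positive, so it is the square root of its square.
  have hq : 0 < (a * e - b * c) / ((c * x + e) * (c * y + e)) :=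
    pos_of_mul_pos_right (hsub ▸ sub_pos.2 hφ) (sub_pos.2 hxy).le
  rw [hsub, ← Real.sqrt_sq hq.le, div_pow, mul_pow, sq (a * e - b * c), mul_div_mul_comm]

theorem mobius_prefactor_covariance_general
    (N d : ℕ) (s : ℕ → ℕ)
    (hsum : ∑ k ∈ Finset.Icc 1 d, s k = 2 * N)
    (a b c e : ℝ) (hdet : b * c < a * e)
    (x : Fin d → ℝ) (hx : StrictMono x)
    (hpole : ∀ i, c * x i + e ≠ 0)
    (hord : StrictMono fun i => (a * x i + b) / (c * x i + e)) :
    (∏ p ∈ Finset.univ.filter (fun p : Fin d × Fin d => p.1 < p.2),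
        ((a * x p.2 + b) / (c * x p.2 + e) - (a * x p.1 + b) / (c * x p.1 + e)) ^
          (-(((s ((p.1 : ℕ) + 1) * s ((p.2 : ℕ) + 1) : ℕ) : ℝ)) / 2))
      = (∏ i : Fin d,
          ((a * e - b * c) / (c * x i + e) ^ 2) ^
            (((s ((i : ℕ) + 1) : ℝ) * ((s ((i : ℕ) + 1) : ℝ) - 2 * (N : ℝ))) / 4)) *
        ∏ p ∈ Finset.univ.filter (fun p : Fin d × Fin d => p.1 < p.2),
          (x p.2 - x p.1) ^
            (-(((s ((p.1 : ℕ) + 1) * s ((p.2 : ℕ) + 1) : ℕ) : ℝ)) / 2) := by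
  have htotal : ∑ i : Fin d, (s (i + 1) : ℝ) = 2 * N := by
    have : ∑ i : Fin d, s (i + 1) = 2 * N := by
      rw [Fin.sum_univ_eq_sum_range (fun i => s (i + 1)), range_eq_Ico, sum_Ico_add']
      exact hsum
    exact_mod_cast this
  have hD : ∀ i, 0 < (a * e - b * c) / (c * x i + e) ^ 2 := fun i =>
    div_pos (sub_pos.2 hdet) (sq_pos_of_ne_zero (hpole i))
  rw [prod_sub_rpow_eq_of_sub_eq_mul_sqrt x _ _
    (fun i j : Fin d => -(((s (i + 1) * s (j + 1) : ℕ) : ℝ)) / 2) hx.monotone hD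
    (fun i j => by rw [Nat.mul_comm]) fun i j hij =>
      mobius_sub_eq_mul_sqrt (hpole i) (hpole j) (hx hij) (hord hij)]
  congr 1
  refine prod_congr rfl fun i _ => congrArg _ ?_
  push_cast
  rw [sum_erase_neg_mul_div (fun j : Fin d => (s (j + 1) : ℝ)), htotal]

/-- For a composition `ς = (s_1, …, s_d)` of `2N` and a Möbius
transformation `φ(t) = (a t + b)/(c t + e)` of the upper half-plane (`ae - bc > 0`)
with `φ(x_1) < ⋯ < φ(x_d)`,
`∏_{1≤i<j≤d} (φ(x_j) - φ(x_i))^{-s_i s_j/2}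
  = ∏_{i=1}^d φ'(x_i)^{s_i(s_i - 2N)/4} · ∏_{1≤i<j≤d} (x_j - x_i)^{-s_i s_j/2}`. -/
theorem mobius_prefactor_covariance
    (N d : ℕ) (hN : 0 < N) (hd : 0 < d) (s : ℕ → ℕ)
    (hpos : ∀ k ∈ Finset.Icc 1 d, 0 < s k)
    (hsum : ∑ k ∈ Finset.Icc 1 d, s k = 2 * N)
    (a b c e : ℝ) (hdet : b * c < a * e)
    (x : Fin d → ℝ) (hx : StrictMono x)
    (hpole : ∀ i, c * x i + e ≠ 0)
    (hord : StrictMono fun i => (a * x i + b) / (c * x i + e)) :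
    (∏ p ∈ Finset.univ.filter (fun p : Fin d × Fin d => p.1 < p.2),
        ((a * x p.2 + b) / (c * x p.2 + e) - (a * x p.1 + b) / (c * x p.1 + e)) ^
          (-(((s ((p.1 : ℕ) + 1) * s ((p.2 : ℕ) + 1) : ℕ) : ℝ)) / 2))
      = (∏ i : Fin d,
          ((a * e - b * c) / (c * x i + e) ^ 2) ^
            (((s ((i : ℕ) + 1) : ℝ) * ((s ((i : ℕ) + 1) : ℝ) - 2 * (N : ℝ))) / 4)) *
        ∏ p ∈ Finset.univ.filter (fun p : Fin d × Fin d => p.1 < p.2),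
          (x p.2 - x p.1) ^
            (-(((s ((p.1 : ℕ) + 1) * s ((p.2 : ℕ) + 1) : ℕ) : ℝ)) / 2) :=
  mobius_prefactor_covariance_general N d s hsum a b c e hdet x hx hpole hord
end
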